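/- Let p be a nonnegative integer divisible by 3 and let k be a positive even integer. Then the 2k-element set J' = {p+3i−1, p+3i+1 : i ∈ [1,k]} can be partitioned into k pairs such that the multiset of pair sums is exactly {2p + 3(k/2+2) + 3i : i ∈ [1,k−1]} ∪ {2p+6}, i.e., k−1 consecutive multiples of 3 together with the multiple of 3 equal to 2p+6. -/

import Mathlib

/-!
Write `J'` as the disjoint union of the residue classes `p + 3j + 2` and `p + 3j + 4`,
`j ∈ [0, k)`. Pairing `p + 3σ(t) + 2` with `p + 3τ(t) + 4` for two permutations `σ, τ` of
`[0, k)` gives the pair sum `2p + 6 + 3(σ(t) + τ(t))`, so with `k = 2m` it suffices to have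
`σ(0) + τ(0) = 0` and `σ(t) + τ(t) = m + t` for `0 < t < 2m`. This is achieved by matching
`s` with `m + s - 1` at `t = 2s - 1` and `m + s` with `s` at `t = 2s`.
-/

open Set

section IndexPairing

variable {m n : ℕ}

def pairFst (m n : ℕ) : ℕ :=
  if n = 0 then 0 else if n % 2 = 1 then (n + 1) / 2 else m + n / 2

def pairSnd (m n : ℕ) : ℕ :=
  if n = 0 then 0 else m + n - pairFst m n

lemma pairFst_add_pairSnd (hn : n ≠ 0) : pairFst m n + pairSnd m n = m + n := by
  unfold pairSnd pairFst
  split_ifs <;> omega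

lemma pairFst_bijOn : BijOn (pairFst m) (Iio (2 * m)) (Iio (2 * m)) := by
  refine ((finite_Iio _).injOn_iff_bijOn_of_mapsTo ?_).mp ?_
  · intro n (hn : n < 2 * m)
    show pairFst m n < 2 * m
    unfold pairFst
    split_ifs <;> omega
  · intro a (ha : a < 2 * m) b (hb : b < 2 * m) h
    unfold pairFst at h
    split_ifs at h <;> omega

lemma pairSnd_bijOn : BijOn (pairSnd m) (Iio (2 * m)) (Iio (2 * m)) := by
  refine ((finite_Iio _).injOn_iff_bijOn_of_mapsTo ?_).mp ?_
  · intro n (hn : n < 2 * m)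
    show pairSnd m n < 2 * m
    unfold pairSnd pairFst
    split_ifs <;> omega
  · intro a (ha : a < 2 * m) b (hb : b < 2 * m) h
    unfold pairSnd pairFst at h
    split_ifs at h <;> omega

end IndexPairing

section Relabelling

variable {p k : ℕ} {σ τ : ℕ → ℕ}

lemma injective_sumElim_of_injOn (hσ : InjOn σ (Iio k)) (hτ : InjOn τ (Iio k)) :
    Function.Injective
      (Sum.elim (fun t : Fin k => p + 3 * σ t + 2) fun t : Fin k => p + 3 * τ t + 4) := by
  refine Function.Injective.sumElim ?_ ?_ fun s t h => by omega
  · intro s t h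
    exact Fin.ext (hσ s.isLt t.isLt (by simp only at h; omega))
  · intro s t h
    exact Fin.ext (hτ s.isLt t.isLt (by simp only at h; omega))

lemma range_sumElim_of_bijOn (hσ : BijOn σ (Iio k) (Iio k)) (hτ : BijOn τ (Iio k) (Iio k)) :
    range (Sum.elim (fun t : Fin k => p + 3 * σ t + 2) fun t : Fin k => p + 3 * τ t + 4) =
      ↑((Finset.Icc 1 k).biUnion fun i => {p + 3 * i - 1, p + 3 * i + 1}) := by
  ext x
  simp only [Set.Sum.elim_range, mem_union, mem_range, Finset.coe_biUnion, Finset.coe_Icc,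
    mem_iUnion, Finset.coe_insert, Finset.coe_singleton, mem_insert_iff, mem_singleton_iff,
    mem_Icc, exists_prop]
  constructor
  · rintro (⟨t, rfl⟩ | ⟨t, rfl⟩)
    · have : σ t < k := hσ.mapsTo t.isLt
      exact ⟨σ t + 1, by omega, Or.inl (by omega)⟩
    · have : τ t < k := hτ.mapsTo t.isLt
      exact ⟨τ t + 1, by omega, Or.inr (by omega)⟩
  · rintro ⟨i, hi, rfl | rfl⟩
    · obtain ⟨t, ht, hσt⟩ := hσ.surjOn (show i - 1 < k by omega)
      exact Or.inl ⟨⟨t, ht⟩, by simp only [hσt]; omega⟩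
    · obtain ⟨t, ht, hτt⟩ := hτ.surjOn (show i - 1 < k by omega)
      exact Or.inr ⟨⟨t, ht⟩, by simp only [hτt]; omega⟩

end Relabelling

theorem pairing_J'_even_general (p k : ℕ) (hk : Even k) (hk0 : 0 < k) :
    ∃ a b : Fin k → ℕ,
      Function.Injective (Sum.elim a b) ∧
      Set.range (Sum.elim a b) =
        ↑((Finset.Icc 1 k).biUnion fun i => {p + 3 * i - 1, p + 3 * i + 1}) ∧
      a ⟨0, hk0⟩ + b ⟨0, hk0⟩ = 2 * p + 6 ∧
      ∀ i : Fin k, i.val ≠ 0 → a i + b i = 2 * p + 3 * (k / 2 + 2) + 3 * i.val := by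
  obtain ⟨m, rfl⟩ := even_iff_two_dvd.mp hk
  refine ⟨fun t => p + 3 * pairFst m t + 2, fun t => p + 3 * pairSnd m t + 4,
    injective_sumElim_of_injOn pairFst_bijOn.injOn pairSnd_bijOn.injOn,
    range_sumElim_of_bijOn pairFst_bijOn pairSnd_bijOn, by simp [pairFst, pairSnd]; ring, ?_⟩
  intro i hi
  have := pairFst_add_pairSnd (m := m) hi
  dsimp only
  omega

/-- Let `p` be a nonnegative multiple of 3 and `k` a positive even integer. The
`2k`-element set `J' = {p+3i−1, p+3i+1 : i ∈ [1,k]}` can be partitioned into `k` pairs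
`{a i, b i}` whose pair sums are exactly the `k−1` consecutive multiples of 3 in
`{2p + 3(k/2+2) + 3i : i ∈ [1,k−1]}` together with the multiple of 3 equal to `2p+6`. -/
theorem pairing_J'_even (p k : ℕ) (hp : 3 ∣ p) (hk : Even k) (hk0 : 0 < k) :
    ∃ a b : Fin k → ℕ,
      Function.Injective (Sum.elim a b) ∧
      Set.range (Sum.elim a b) =
        ↑((Finset.Icc 1 k).biUnion fun i => {p + 3 * i - 1, p + 3 * i + 1}) ∧
      a ⟨0, hk0⟩ + b ⟨0, hk0⟩ = 2 * p + 6 ∧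
      ∀ i : Fin k, i.val ≠ 0 → a i + b i = 2 * p + 3 * (k / 2 + 2) + 3 * i.val :=
  pairing_J'_even_general p k hk hk0
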